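/- arXiv:2509.24265 — 2 statements merged into one kernel-verified Lean document; each statement's English description precedes it below -/
import Mathlib

section
/- Let c ≥ 0 and r ≥ 0 be integers. In the field ℚ(v, K), one has [K;c,r]_v = ∑_{s=0}^{r} v^{c(r−s)} [c choose s]_v K^{−s} [K;0,r−s]_v. -/
/-!
Both sides satisfy the same recursion in `c`. Splitting off the first factor of `[K;c+1,t+1]` and writing
`K v^{c+1} − K⁻¹ v^{−c−1} = v^{t+1} (K v^{c−t} − K⁻¹ v^{t−c}) + v^{t−c} K⁻¹ (v^{t+1} − v^{−t−1})`
gives `[K;c+1,t+1] = v^{t+1} [K;c,t+1] + v^{t−c} K⁻¹ [K;c,t]`, while the quantum Pascal rule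
`[c+1 choose s+1] = v^{s+1} [c choose s+1] + v^{s−c} [c choose s]` shows that the summands obey
the same recursion term by term. The two sides agree for `r = 0`, and for `c = 0`, where
`[0 choose s] = 0` for `s > 0` leaves only the summand `[K;0,r]`.
-/

/-- The field `ℚ(v, K)` of rational functions in two variables, realized as `ℚ(v)(K)`. -/
noncomputable abbrev F2 : Type := RatFunc (RatFunc ℚ)

/-- The variable `v` of `ℚ(v, K)`. -/
noncomputable def vv : F2 := RatFunc.C RatFunc.X

/-- The variable `K` of `ℚ(v, K)`. -/
noncomputable def KK : F2 := RatFunc.X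

/-- `[K;c,t]_v = ∏_{s=1}^{t} (K v^{c−s+1} − K^{−1} v^{−c+s−1})/(v^s − v^{−s})`. -/
noncomputable def Kbr (c : ℤ) (t : ℕ) : F2 :=
  ∏ s ∈ Finset.range t,
    (KK * vv ^ (c - (s : ℤ)) - KK⁻¹ * vv ^ (-c + (s : ℤ))) /
      (vv ^ ((s : ℤ) + 1) - vv ^ (-(s : ℤ) - 1))

/-- The balanced quantum number `[c]_v = (v^c − v^{−c})/(v − v^{−1})` for `c ∈ ℤ`. -/
noncomputable def qintF (c : ℤ) : F2 := (vv ^ c - vv ^ (-c)) / (vv - vv⁻¹)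

/-- The balanced quantum factorial `[m]!_v`. -/
noncomputable def qfactF (m : ℕ) : F2 := ∏ k ∈ Finset.range m, qintF ((k : ℤ) + 1)

/-- `[c choose m]_v = [c]_v[c−1]_v⋯[c−m+1]_v/[m]!_v` for `c ∈ ℤ`, `m ∈ ℕ`. -/
noncomputable def qbinomF (c : ℤ) (m : ℕ) : F2 :=
  (∏ k ∈ Finset.range m, qintF (c - (k : ℤ))) / qfactF m

open Finset

lemma KK_ne_zero : KK ≠ 0 := RatFunc.X_ne_zero

lemma vv_ne_zero : vv ≠ 0 := by simp [vv, RatFunc.X_ne_zero]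

lemma vv_pow_ne_one {n : ℕ} (hn : n ≠ 0) : vv ^ n ≠ 1 := by
  intro h
  have hX : (RatFunc.X : RatFunc ℚ) ^ n = 1 := RatFunc.C_injective (by simpa [vv] using h)
  have := congrArg RatFunc.intDegree hX
  rw [← RatFunc.algebraMap_X, ← map_pow, RatFunc.intDegree_polynomial] at this
  exact hn (by simpa using this)

lemma vv_zpow_injective : Function.Injective fun n : ℤ ↦ vv ^ n := by
  intro a b hab
  wlog hlt : a < b generalizing a b
  · rcases (not_lt.1 hlt).lt_or_eq with h | h
    · exact (this hab.symm h).symm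
    · exact h.symm
  obtain ⟨k, hk⟩ := Int.eq_ofNat_of_zero_le (sub_nonneg.2 hlt.le)
  have hpow : vv ^ k = 1 := by
    rw [← zpow_natCast, ← hk, zpow_sub₀ vv_ne_zero]
    exact div_eq_one_iff_eq (zpow_ne_zero _ vv_ne_zero) |>.2 hab.symm
  exact absurd hpow (vv_pow_ne_one (by omega))

lemma vv_zpow_sub_zpow_ne_zero {a b : ℤ} (h : a ≠ b) : vv ^ a - vv ^ b ≠ 0 :=
  sub_ne_zero.2 (vv_zpow_injective.ne h)

lemma vv_sub_inv_ne_zero : vv - vv⁻¹ ≠ 0 := by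
  simpa using vv_zpow_sub_zpow_ne_zero (a := 1) (b := -1) (by decide)

lemma qintF_add (a b : ℤ) : qintF (a + b) = vv ^ b * qintF a + vv ^ (-a) * qintF b := by
  simp only [qintF, zpow_add₀ vv_ne_zero, zpow_neg, neg_add]
  field_simp
  ring

lemma qintF_zero : qintF 0 = 0 := by simp [qintF]

lemma qintF_natCast_succ_ne_zero (n : ℕ) : qintF ((n : ℤ) + 1) ≠ 0 :=
  div_ne_zero (vv_zpow_sub_zpow_ne_zero (by omega)) vv_sub_inv_ne_zero

lemma qfactF_succ (m : ℕ) : qfactF (m + 1) = qfactF m * qintF ((m : ℤ) + 1) :=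
  prod_range_succ _ _

@[simp]
lemma qbinomF_zero_right (c : ℤ) : qbinomF c 0 = 1 := by simp [qbinomF, qfactF]

lemma qbinomF_zero_succ (m : ℕ) : qbinomF 0 (m + 1) = 0 := by
  rw [qbinomF, prod_eq_zero (mem_range.2 m.succ_pos) (by simpa using qintF_zero), zero_div]

lemma qbinomF_succ_right (c : ℤ) (m : ℕ) :
    qbinomF c (m + 1) = qbinomF c m * qintF (c - m) / qintF ((m : ℤ) + 1) := by
  rw [qbinomF, prod_range_succ, qfactF_succ, qbinomF, mul_div_mul_comm, mul_div_assoc]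

lemma qbinomF_succ_succ_eq (c : ℤ) (m : ℕ) :
    qbinomF (c + 1) (m + 1) = qbinomF c m * qintF (c + 1) / qintF ((m : ℤ) + 1) := by
  have hshift (k : ℕ) : qintF (c + 1 - ((k + 1 : ℕ) : ℤ)) = qintF (c - k) := by
    congr 1; push_cast; ring
  rw [qbinomF, prod_range_succ', qfactF_succ, qbinomF]
  simp only [hshift, Nat.cast_zero, sub_zero]
  ring

lemma qbinomF_succ_succ (c : ℤ) (m : ℕ) :
    qbinomF (c + 1) (m + 1) =
      vv ^ ((m : ℤ) + 1) * qbinomF c (m + 1) + vv ^ ((m : ℤ) - c) * qbinomF c m := by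
  have hsplit : qintF (c + 1) =
      vv ^ ((m : ℤ) + 1) * qintF (c - m) + vv ^ ((m : ℤ) - c) * qintF ((m : ℤ) + 1) := by
    rw [show c + 1 = (c - m) + (m + 1) by ring, qintF_add, neg_sub]
  rw [qbinomF_succ_succ_eq, qbinomF_succ_right, hsplit]
  field_simp [qintF_natCast_succ_ne_zero m]

lemma Kbr_succ (c : ℤ) (t : ℕ) :
    Kbr c (t + 1) = Kbr c t * ((KK * vv ^ (c - t) - KK⁻¹ * vv ^ (-c + t)) /
      (vv ^ ((t : ℤ) + 1) - vv ^ (-(t : ℤ) - 1))) :=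
  prod_range_succ _ _

lemma Kbr_succ_succ_eq (c : ℤ) (t : ℕ) :
    Kbr (c + 1) (t + 1) = Kbr c t * ((KK * vv ^ (c + 1) - KK⁻¹ * vv ^ (-(c + 1))) /
      (vv ^ ((t : ℤ) + 1) - vv ^ (-(t : ℤ) - 1))) := by
  have hnum : ∏ s ∈ range (t + 1), (KK * vv ^ (c + 1 - s) - KK⁻¹ * vv ^ (-(c + 1) + s)) =
      (∏ s ∈ range t, (KK * vv ^ (c - s) - KK⁻¹ * vv ^ (-c + s))) *
        (KK * vv ^ (c + 1) - KK⁻¹ * vv ^ (-(c + 1))) := by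
    rw [prod_range_succ']
    push_cast
    ring_nf
  rw [Kbr, Kbr, prod_div_distrib, prod_div_distrib, hnum, prod_range_succ,
    mul_div_mul_comm]

lemma Kbr_succ_succ (c : ℤ) (t : ℕ) :
    Kbr (c + 1) (t + 1) =
      vv ^ ((t : ℤ) + 1) * Kbr c (t + 1) + vv ^ (t - c) * KK⁻¹ * Kbr c t := by
  have hD : vv ^ ((t : ℤ) + 1) - vv ^ (-(t : ℤ) - 1) ≠ 0 :=
    vv_zpow_sub_zpow_ne_zero (by omega)
  have hsplit : KK * vv ^ (c + 1) - KK⁻¹ * vv ^ (-(c + 1)) =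
      vv ^ ((t : ℤ) + 1) * (KK * vv ^ (c - t) - KK⁻¹ * vv ^ (-c + t)) +
        vv ^ (t - c) * KK⁻¹ * (vv ^ ((t : ℤ) + 1) - vv ^ (-(t : ℤ) - 1)) := by
    simp only [zpow_add₀ vv_ne_zero, zpow_sub₀ vv_ne_zero, zpow_neg, zpow_one, zpow_natCast]
    field_simp [KK_ne_zero, vv_ne_zero]
    ring
  rw [Kbr_succ_succ_eq, Kbr_succ, hsplit]
  field_simp

noncomputable def kbrTerm (c : ℤ) (r s : ℕ) : F2 :=
  vv ^ (c * ((r : ℤ) - (s : ℤ))) * qbinomF c s * KK ^ (-(s : ℤ)) * Kbr 0 (r - s)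

lemma kbrTerm_succ_succ (c : ℤ) (r s : ℕ) :
    kbrTerm (c + 1) (r + 1) (s + 1) =
      vv ^ ((r : ℤ) + 1) * kbrTerm c (r + 1) (s + 1) +
        vv ^ (r - c) * KK⁻¹ * kbrTerm c r s := by
  have hexp : ((r + 1 : ℕ) : ℤ) - (s + 1 : ℕ) = r - s := by push_cast; ring
  unfold kbrTerm
  rw [hexp, Nat.add_sub_add_right, qbinomF_succ_succ]
  simp only [add_mul, one_mul, zpow_add₀ vv_ne_zero, zpow_add₀ KK_ne_zero,
    zpow_sub₀ vv_ne_zero, zpow_neg, zpow_natCast, zpow_one, Nat.cast_succ]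
  field_simp [KK_ne_zero, vv_ne_zero]

lemma kbrTerm_succ_zero (c : ℤ) (r : ℕ) :
    kbrTerm (c + 1) (r + 1) 0 = vv ^ ((r : ℤ) + 1) * kbrTerm c (r + 1) 0 := by
  simp only [kbrTerm, Nat.cast_zero, sub_zero, add_mul, one_mul, zpow_add₀ vv_ne_zero,
    qbinomF_zero_right, Nat.cast_succ, mul_one]
  ring

lemma sum_kbrTerm_succ_succ (c : ℤ) (r : ℕ) :
    ∑ s ∈ range (r + 2), kbrTerm (c + 1) (r + 1) s =
      vv ^ ((r : ℤ) + 1) * ∑ s ∈ range (r + 2), kbrTerm c (r + 1) s +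
        vv ^ (r - c) * KK⁻¹ * ∑ s ∈ range (r + 1), kbrTerm c r s := by
  rw [sum_range_succ', sum_range_succ' (kbrTerm c (r + 1)), mul_add, mul_sum, mul_sum,
    kbrTerm_succ_zero, add_right_comm, ← sum_add_distrib]
  simp only [kbrTerm_succ_succ]

lemma sum_kbrTerm_zero (r : ℕ) : ∑ s ∈ range (r + 1), kbrTerm 0 r s = Kbr 0 r := by
  rw [sum_range_succ']
  simp [kbrTerm, qbinomF_zero_succ]

/-- For integers `c ≥ 0`, `r ≥ 0`, in `ℚ(v,K)`:
`[K;c,r]_v = ∑_{s=0}^{r} v^{c(r−s)} [c choose s]_v K^{−s} [K;0,r−s]_v`. -/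
theorem stmt5 (c r : ℕ) :
    Kbr (c : ℤ) r =
      ∑ s ∈ Finset.range (r + 1),
        vv ^ ((c : ℤ) * ((r : ℤ) - (s : ℤ))) * qbinomF (c : ℤ) s *
          KK ^ (-(s : ℤ)) * Kbr 0 (r - s) := by
  change Kbr c r = ∑ s ∈ range (r + 1), kbrTerm c r s
  induction c generalizing r with
  | zero => exact (sum_kbrTerm_zero r).symm
  | succ c ih =>
    cases r with
    | zero => simp [Kbr, kbrTerm]
    | succ r => rw [Nat.cast_succ, Kbr_succ_succ, sum_kbrTerm_succ_succ, ih, ih]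
end

section
/- Let A be an associative ℚ(v)-superalgebra containing an even element E, odd elements F̄, Ē, K̄, K̄', and invertible even elements K, K' (playing the roles of E_i, F̄_i, Ē_i, K̄_i, K̄_{i+1}, K_i, K_{i+1}), satisfying: E F̄ − F̄ E = K'^{−1}K̄ − K̄'K^{−1}; K E = v E K; K' E = v^{−1} E K'; K̄ E = v E K̄ + Ē K^{−1}; v K̄' E − E K̄' = −K'^{−1} Ē; and E Ē = Ē E, with K, K' commuting with each other and with K̄, K̄'. Then for all m ≥ 2, E^{(m)} F̄ = F̄ E^{(m)} + v^{m−1} E^{(m−1)} K̄ K'^{−1} − v^{−m+1} E^{(m−1)} K̄' K^{−1} + E^{(m−2)} Ē K'^{−1} K^{−1}. -/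
/-- `v^n` in `ℚ(v)` for `n : ℤ`. -/
noncomputable def qv (n : ℤ) : RatFunc ℚ := (RatFunc.X : RatFunc ℚ) ^ n

/-- The balanced quantum integer `[m]_v = (v^m − v^{−m})/(v − v^{−1})` in `ℚ(v)`. -/
noncomputable def qint (m : ℕ) : RatFunc ℚ := (qv m - qv (-(m : ℤ))) / (qv 1 - qv (-1))

/-- The balanced quantum factorial `[m]!_v` in `ℚ(v)`. -/
noncomputable def qfact (m : ℕ) : RatFunc ℚ := ∏ k ∈ Finset.range m, qint (k + 1)

/-- The divided power `x^{(m)} = x^m/[m]!_v` in a `ℚ(v)`-algebra. -/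
noncomputable def dp {A : Type*} [Ring A] [Algebra (RatFunc ℚ) A] (x : A) (m : ℕ) : A :=
  (qfact m)⁻¹ • x ^ m

lemma qv_add (a b : ℤ) : qv (a+b) = qv a * qv b := zpow_add₀ RatFunc.X_ne_zero a b
lemma qv_zero : qv 0 = 1 := zpow_zero _
lemma qv_ne (n : ℤ) : qv n ≠ 0 := zpow_ne_zero _ RatFunc.X_ne_zero

lemma X_pow_ne_one (k : ℕ) (hk : k ≠ 0) : (RatFunc.X : RatFunc ℚ)^k ≠ 1 := by
  intro h
  have h2 : (Polynomial.X : Polynomial ℚ)^k = 1 := by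
    apply RatFunc.algebraMap_injective ℚ
    simpa [map_pow, RatFunc.algebraMap_X] using h
  have := congrArg (Polynomial.eval 0) h2
  simp [hk] at this

lemma qv_eq_one {c : ℤ} (h : qv c = 1) : c = 0 := by
  by_contra hc
  have key : ∀ d : ℤ, 0 < d → qv d ≠ 1 := by
    intro d hd hqd
    have : (RatFunc.X : RatFunc ℚ)^(d.toNat) = 1 := by
      rwa [show d = (d.toNat : ℤ) by omega, qv, zpow_natCast] at hqd
    exact X_pow_ne_one d.toNat (by omega) this
  rcases lt_or_gt_of_ne hc with h1 | h1
  · have : qv (-c) = 1 := by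
      have h2 : qv (-c) * qv c = 1 := by rw [← qv_add]; simp [qv_zero]
      rw [h, mul_one] at h2; exact h2
    exact key (-c) (by omega) this
  · exact key c h1 h

lemma qv_inj {a b : ℤ} (h : qv a = qv b) : a = b := by
  have h1 : qv (a - b) = 1 := by
    rw [sub_eq_add_neg, qv_add, h, ← qv_add]; simp [qv_zero]
  have := qv_eq_one h1; omega

lemma d_ne : qv 1 - qv (-1) ≠ 0 := by
  rw [sub_ne_zero]; intro h; have := qv_inj h; omega

lemma qint_ne {m : ℕ} (hm : 1 ≤ m) : qint m ≠ 0 := by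
  apply div_ne_zero _ d_ne
  rw [sub_ne_zero]; intro h; have := qv_inj h; omega

lemma qfact_ne (m : ℕ) : qfact m ≠ 0 :=
  Finset.prod_ne_zero_iff.mpr fun k _ => qint_ne (by omega)

lemma qfact_succ (m : ℕ) : qfact (m+1) = qfact m * qint (m+1) :=
  Finset.prod_range_succ _ _

noncomputable def coefA : ℕ → RatFunc ℚ
  | 0 => 0
  | n+1 => qv 2 * coefA n + 1
noncomputable def coefB : ℕ → RatFunc ℚ
  | 0 => 0
  | n+1 => qv (-2) * coefB n + 1
noncomputable def coefS : ℕ → RatFunc ℚ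
  | 0 => 0
  | n+1 => coefS n + qv 1 * coefA n + qv (-1) * coefB n

lemma coefA_eq (n : ℕ) : coefA n = qv ((n:ℤ) - 1) * qint n := by
  induction n with
  | zero => simp [coefA, qint, qv_zero]
  | succ k ih =>
    rw [show coefA (k+1) = qv 2 * coefA k + 1 from rfl, ih]
    unfold qint
    push_cast
    field_simp [d_ne]
    simp only [mul_sub, sub_mul, mul_add, add_mul, mul_assoc, ← qv_add]
    ring_nf

lemma coefB_eq (n : ℕ) : coefB n = qv (1 - (n:ℤ)) * qint n := by
  induction n with
  | zero => simp [coefB, qint, qv_zero]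
  | succ k ih =>
    rw [show coefB (k+1) = qv (-2) * coefB k + 1 from rfl, ih]
    unfold qint
    push_cast
    field_simp [d_ne]
    simp only [mul_sub, sub_mul, mul_add, add_mul, mul_assoc, ← qv_add]
    ring_nf

lemma coefS_eq (n : ℕ) : coefS (n+1) = qint (n+1) * qint n := by
  induction n with
  | zero => simp [coefS, coefA, coefB, qint, qv_zero]
  | succ k ih =>
    rw [show coefS (k+2) = coefS (k+1) + qv 1 * coefA (k+1) + qv (-1) * coefB (k+1) from rfl,
      ih, coefA_eq, coefB_eq]
    unfold qint
    push_cast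
    field_simp [d_ne]
    simp only [mul_sub, sub_mul, mul_add, add_mul, mul_assoc, ← qv_add]
    ring_nf

/-- generic power-commutation induction -/
lemma aux_pow {R A : Type*} [CommRing R] [Ring A] [Algebra R A]
    (v1 v1' v2 v2' : R) (E Fb P Q D : A) (a b s : ℕ → R)
    (hEFb : E * Fb = Fb * E + P - Q)
    (hPE : P * E = v2 • (E * P) + v1 • D)
    (hQE : Q * E = v2' • (E * Q) - v1' • D)
    (hDE : D * E = E * D)
    (ha0 : a 0 = 0) (ha : ∀ n, a (n+1) = v2 * a n + 1)
    (hb0 : b 0 = 0) (hb : ∀ n, b (n+1) = v2' * b n + 1)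
    (hs0 : s 0 = 0) (hs : ∀ n, s (n+1) = s n + v1 * a n + v1' * b n) :
    ∀ j : ℕ, E^(j+2) * Fb = Fb * E^(j+2) + a (j+2) • (E^(j+1) * P)
      - b (j+2) • (E^(j+1) * Q) + s (j+2) • (E^j * D) := by
  have hstep : ∀ n : ℕ, E^(n+1) * Fb = (E^n * Fb) * E + E^n * P - E^n * Q := by
    intro n
    rw [pow_succ, mul_assoc, hEFb]
    noncomm_ring
  have base : E^1 * Fb = Fb * E^1 + a 1 • (E^0 * P) - b 1 • (E^0 * Q) := by
    simp [ha, ha0, hb, hb0, hEFb]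
  intro j
  induction j with
  | zero =>
    rw [hstep 1, base]
    have hP' : (E^0 * P) * E = v2 • (E^1 * P) + v1 • (E^0 * D) := by
      simp [hPE]
    have hQ' : (E^0 * Q) * E = v2' • (E^1 * Q) - v1' • (E^0 * D) := by
      simp [hQE]
    simp only [add_mul, sub_mul, smul_mul_assoc, hP', hQ',
      show (Fb * E^1) * E = Fb * E^2 by rw [mul_assoc, ← pow_succ],
      ha 1, hb 1, hs 1, ha 0, hb 0, hs 0, ha0, hb0, hs0]
    module
  | succ k ih =>
    rw [hstep (k+2), ih]
    have hP' : (E^(k+1) * P) * E = v2 • (E^(k+2) * P) + v1 • (E^(k+1) * D) := by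
      rw [mul_assoc, hPE, mul_add, mul_smul_comm, mul_smul_comm, ← mul_assoc, ← pow_succ]
    have hQ' : (E^(k+1) * Q) * E = v2' • (E^(k+2) * Q) - v1' • (E^(k+1) * D) := by
      rw [mul_assoc, hQE, mul_sub, mul_smul_comm, mul_smul_comm, ← mul_assoc, ← pow_succ]
    have hD' : (E^k * D) * E = E^(k+1) * D := by
      rw [mul_assoc, hDE, ← mul_assoc, ← pow_succ]
    simp only [add_mul, sub_mul, smul_mul_assoc, hP', hQ', hD',
      show (Fb * E^(k+2)) * E = Fb * E^(k+3) by rw [mul_assoc, ← pow_succ],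
      ha (k+2), hb (k+2), hs (k+2)]
    module

/-- generic final assembly -/
lemma assemble {R A : Type*} [CommRing R] [Ring A] [Algebra R A]
    (n n1 n2 : ℕ) (E Fb X1 X2 Y1 Y2 Z1 Z2 Z3 : A)
    (a b s f2 f1 f0 p q : R)
    (h : E^n * Fb = Fb * E^n + a • (E^n1 * (X1 * X2)) - b • (E^n1 * (Y1 * Y2))
      + s • (E^n2 * (Z1 * Z2 * Z3)))
    (ha : f2 * a = p * f1) (hb : f2 * b = q * f1) (hs : f2 * s = f0) :
    (f2 • E^n) * Fb = Fb * (f2 • E^n) + p • ((f1 • E^n1) * X1 * X2)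
      - q • ((f1 • E^n1) * Y1 * Y2) + ((f0 • E^n2) * Z1 * Z2 * Z3) := by
  rw [smul_mul_assoc, h]
  simp only [smul_add, smul_sub, smul_smul, ha, hb, hs, smul_mul_assoc, mul_smul_comm,
    mul_assoc]
  try module

/-- inverse commutes -/
lemma invcomm {A : Type*} [Ring A] (a ainv b : A)
    (h1 : a * ainv = 1) (h2 : ainv * a = 1) (h : a * b = b * a) : ainv * b = b * ainv := by
  have h3 := congrArg (fun x => ainv * x * ainv) h
  simp only [← mul_assoc] at h3
  rw [h2, one_mul] at h3
  rw [mul_assoc (ainv*b) a ainv, h1, mul_one] at h3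
  exact h3.symm

/-- conjugation by inverse -/
lemma conj {R A : Type*} [CommRing R] [Ring A] [Algebra R A] (K Kinv E : A) (c c' : R)
    (hK : K * Kinv = 1) (hK2 : Kinv * K = 1) (hcc : c' * c = 1)
    (h : K * E = c • (E * K)) : Kinv * E = c' • (E * Kinv) := by
  have h1 : E * Kinv = c • (Kinv * E) := by
    have h3 : Kinv * (K * E) * Kinv = E * Kinv := by rw [← mul_assoc, hK2, one_mul]
    rw [h] at h3
    rw [← h3, mul_smul_comm, smul_mul_assoc]
    congr 1
    simp only [mul_assoc, hK, mul_one]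
  calc Kinv * E = (c' * c) • (Kinv * E) := by rw [hcc, one_smul]
    _ = c' • (E * Kinv) := by rw [← smul_smul, ← h1]

/-- Divided-power commutation relation in the Lusztig integral form of `U_v(q_n)`:
with `E = E_i`, `Fb = F̄_i`, `Eb = Ē_i`, `Kb = K̄_i`, `Kb' = K̄_{i+1}`, `K, K' = K_i, K_{i+1}`
(with two-sided inverses `Kinv, K'inv`), satisfying the listed defining relations, one has,
for all `m ≥ 2`,
`E^{(m)} F̄ = F̄ E^{(m)} + v^{m−1} E^{(m−1)} K̄ K'^{−1} − v^{−m+1} E^{(m−1)} K̄' K^{−1}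
  + E^{(m−2)} Ē K'^{−1} K^{−1}`. -/
theorem stmt15 {A : Type*} [Ring A] [Algebra (RatFunc ℚ) A]
    (E Fb Eb Kb Kb' K K' Kinv K'inv : A)
    (hK : K * Kinv = 1) (hK2 : Kinv * K = 1)
    (hK' : K' * K'inv = 1) (hK'2 : K'inv * K' = 1)
    (hKK' : K * K' = K' * K)
    (hKKb : K * Kb = Kb * K) (hKKb' : K * Kb' = Kb' * K)
    (hK'Kb : K' * Kb = Kb * K') (hK'Kb' : K' * Kb' = Kb' * K')
    (hEFb : E * Fb - Fb * E = K'inv * Kb - Kb' * Kinv)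
    (hKE : K * E = qv 1 • (E * K))
    (hK'E : K' * E = qv (-1) • (E * K'))
    (hKbE : Kb * E = qv 1 • (E * Kb) + Eb * Kinv)
    (hKb'E : qv 1 • (Kb' * E) - E * Kb' = -(K'inv * Eb))
    (hEEb : E * Eb = Eb * E) :
    ∀ m : ℕ, 2 ≤ m →
      dp E m * Fb =
        Fb * dp E m + qv ((m : ℤ) - 1) • (dp E (m - 1) * Kb * K'inv) -
          qv (1 - (m : ℤ)) • (dp E (m - 1) * Kb' * Kinv) +
          dp E (m - 2) * Eb * K'inv * Kinv := by
  -- scalar cancellation facts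
  have hq0 : ∀ c : ℤ, qv c * qv (-c) = 1 := fun c => by rw [← qv_add]; simp [qv_zero]
  -- inverse-commutation facts
  have hK'invK : K'inv * K = K * K'inv := invcomm K' K'inv K hK' hK'2 hKK'.symm
  have hKinvK'inv : Kinv * K'inv = K'inv * Kinv :=
    invcomm K Kinv K'inv hK hK2 hK'invK.symm
  have hK'invKb : K'inv * Kb = Kb * K'inv := invcomm K' K'inv Kb hK' hK'2 hK'Kb
  -- scaled commutations with inverses
  have hKinvE : Kinv * E = qv (-1) • (E * Kinv) :=
    conj K Kinv E (qv 1) (qv (-1)) hK hK2 (hq0 (-1)) hKE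
  have hK'invE : K'inv * E = qv 1 • (E * K'inv) :=
    conj K' K'inv E (qv (-1)) (qv 1) hK' hK'2 (hq0 1) hK'E
  -- K' commutes with Eb up to v
  have hEb : Eb = Kb * (E * K) - qv 1 • (E * (Kb * K)) := by
    have h1 : Eb * Kinv = Kb * E - qv 1 • (E * Kb) := by rw [hKbE]; abel
    have h2 : Eb * Kinv * K = Eb := by rw [mul_assoc, hK2, mul_one]
    rw [← h2, h1]
    simp only [sub_mul, smul_mul_assoc, mul_assoc]
  have hK'Eb : K' * Eb = qv (-1) • (Eb * K') := by
    have rKb : ∀ t : A, K' * (Kb * t) = Kb * (K' * t) := fun t => by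
      rw [← mul_assoc, hK'Kb, mul_assoc]
    have rE : ∀ t : A, K' * (E * t) = qv (-1) • (E * (K' * t)) := fun t => by
      rw [← mul_assoc, hK'E, smul_mul_assoc, mul_assoc]
    have rK : ∀ t : A, K * (K' * t) = K' * (K * t) := fun t => by
      rw [← mul_assoc, hKK', mul_assoc]
    rw [hEb]
    simp only [sub_mul, smul_mul_assoc, mul_assoc, mul_sub, smul_sub, mul_smul_comm,
      rKb, rE, rK, smul_smul, ← qv_add]
    norm_num [qv_zero, hKK']
  have hK'invEb : K'inv * Eb = qv 1 • (Eb * K'inv) :=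
    conj K' K'inv Eb (qv (-1)) (qv 1) hK' hK'2 (hq0 1) hK'Eb
  -- the three base commutation relations
  have hEFb' : E * Fb = Fb * E + Kb * K'inv - Kb' * Kinv := by
    calc E * Fb = Fb * E + (E * Fb - Fb * E) := by abel
      _ = Fb * E + (Kb * K'inv - Kb' * Kinv) := by rw [hEFb, hK'invKb]
      _ = Fb * E + Kb * K'inv - Kb' * Kinv := by abel
  have hPE : (Kb * K'inv) * E = qv 2 • (E * (Kb * K'inv)) + qv 1 • (Eb * K'inv * Kinv) := by
    calc (Kb * K'inv) * E = Kb * (K'inv * E) := by rw [mul_assoc]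
      _ = qv 1 • ((Kb * E) * K'inv) := by rw [hK'invE, mul_smul_comm, mul_assoc]
      _ = qv 1 • ((qv 1 • (E * Kb) + Eb * Kinv) * K'inv) := by rw [hKbE]
      _ = (qv 1 * qv 1) • (E * (Kb * K'inv)) + qv 1 • (Eb * (Kinv * K'inv)) := by
          rw [add_mul, smul_add, smul_mul_assoc, smul_smul, mul_assoc, mul_assoc]
      _ = qv 2 • (E * (Kb * K'inv)) + qv 1 • (Eb * K'inv * Kinv) := by
          rw [← qv_add, hKinvK'inv]; norm_num [mul_assoc]
  have hKb'E2 : Kb' * E = qv (-1) • (E * Kb') - Eb * K'inv := by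
    have h1 : qv 1 • (Kb' * E) = E * Kb' - K'inv * Eb := by
      calc qv 1 • (Kb' * E) = (qv 1 • (Kb' * E) - E * Kb') + E * Kb' := by abel
        _ = -(K'inv * Eb) + E * Kb' := by rw [hKb'E]
        _ = E * Kb' - K'inv * Eb := by abel
    calc Kb' * E = qv (-1) • (qv 1 • (Kb' * E)) := by
          rw [smul_smul, mul_comm, hq0, one_smul]
      _ = qv (-1) • (E * Kb') - qv (-1) • (K'inv * Eb) := by rw [h1, smul_sub]
      _ = qv (-1) • (E * Kb') - Eb * K'inv := by
          rw [hK'invEb, smul_smul, ← qv_add]; norm_num [qv_zero]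
  have hQE : (Kb' * Kinv) * E = qv (-2) • (E * (Kb' * Kinv)) - qv (-1) • (Eb * K'inv * Kinv) := by
    calc (Kb' * Kinv) * E = Kb' * (Kinv * E) := by rw [mul_assoc]
      _ = qv (-1) • ((Kb' * E) * Kinv) := by rw [hKinvE, mul_smul_comm, mul_assoc]
      _ = qv (-1) • ((qv (-1) • (E * Kb') - Eb * K'inv) * Kinv) := by rw [hKb'E2]
      _ = (qv (-1) * qv (-1)) • (E * (Kb' * Kinv)) - qv (-1) • (Eb * K'inv * Kinv) := by
          rw [sub_mul, smul_sub, smul_mul_assoc, smul_smul, mul_assoc]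
      _ = qv (-2) • (E * (Kb' * Kinv)) - qv (-1) • (Eb * K'inv * Kinv) := by
          rw [← qv_add]; norm_num
  have hEEb' : ∀ t : A, Eb * (E * t) = E * (Eb * t) := fun t => by
    rw [← mul_assoc, ← hEEb, mul_assoc]
  have hDE : (Eb * K'inv * Kinv) * E = E * (Eb * K'inv * Kinv) := by
    have e1 : Eb * K'inv * Kinv * E = Eb * (K'inv * (Kinv * E)) := by
      simp only [mul_assoc]
    have rK'invE : ∀ t : A, K'inv * (E * t) = qv 1 • (E * (K'inv * t)) := fun t => by
      rw [← mul_assoc, hK'invE, smul_mul_assoc, mul_assoc]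
    rw [e1, hKinvE]
    simp only [mul_smul_comm, rK'invE, smul_smul, hEEb', ← qv_add]
    norm_num [qv_zero, mul_assoc]
  have AUX := aux_pow (qv 1) (qv (-1)) (qv 2) (qv (-2)) E Fb (Kb * K'inv) (Kb' * Kinv)
    (Eb * K'inv * Kinv) coefA coefB coefS hEFb' hPE hQE hDE rfl (fun n => rfl) rfl
    (fun n => rfl) rfl (fun n => rfl)
  intro m hm
  obtain ⟨j, rfl⟩ : ∃ j, m = j + 2 := ⟨m - 2, by omega⟩
  have hfact2 : qfact (j+2) = qfact j * qint (j+1) * qint (j+2) := by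
    rw [qfact_succ, qfact_succ]
  have hq1 : qfact (j+2) = qfact (j+1) * qint (j+2) := qfact_succ (j+1)
  have h1 : qint (j+1) ≠ 0 := qint_ne (by omega)
  have h2 : qint (j+2) ≠ 0 := qint_ne (by omega)
  have hA2 : (qfact (j+2))⁻¹ * coefA (j+2) = qv ((↑(j+2):ℤ) - 1) * (qfact (j+1))⁻¹ := by
    rw [coefA_eq, hq1, mul_inv]
    calc (qfact (j+1))⁻¹ * (qint (j+2))⁻¹ * (qv ((↑(j+2):ℤ) - 1) * qint (j+2))
        = qv ((↑(j+2):ℤ) - 1) * (qfact (j+1))⁻¹ * ((qint (j+2))⁻¹ * qint (j+2)) := by ring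
      _ = qv ((↑(j+2):ℤ) - 1) * (qfact (j+1))⁻¹ := by rw [inv_mul_cancel₀ h2, mul_one]
  have hB2 : (qfact (j+2))⁻¹ * coefB (j+2) = qv (1 - (↑(j+2):ℤ)) * (qfact (j+1))⁻¹ := by
    rw [coefB_eq, hq1, mul_inv]
    calc (qfact (j+1))⁻¹ * (qint (j+2))⁻¹ * (qv (1 - (↑(j+2):ℤ)) * qint (j+2))
        = qv (1 - (↑(j+2):ℤ)) * (qfact (j+1))⁻¹ * ((qint (j+2))⁻¹ * qint (j+2)) := by ring
      _ = qv (1 - (↑(j+2):ℤ)) * (qfact (j+1))⁻¹ := by rw [inv_mul_cancel₀ h2, mul_one]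
  have hS2 : (qfact (j+2))⁻¹ * coefS (j+2) = (qfact j)⁻¹ := by
    rw [show coefS (j+2) = qint (j+2) * qint (j+1) from coefS_eq (j+1), hfact2, mul_inv, mul_inv]
    calc (qfact j)⁻¹ * (qint (j+1))⁻¹ * (qint (j+2))⁻¹ * (qint (j+2) * qint (j+1))
        = (qfact j)⁻¹ * (((qint (j+1))⁻¹ * qint (j+1)) * ((qint (j+2))⁻¹ * qint (j+2))) := by
          ring
      _ = (qfact j)⁻¹ := by rw [inv_mul_cancel₀ h1, inv_mul_cancel₀ h2, one_mul, mul_one]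
  have final := assemble (j+2) (j+1) j E Fb Kb K'inv Kb' Kinv Eb K'inv Kinv
    (coefA (j+2)) (coefB (j+2)) (coefS (j+2)) (qfact (j+2))⁻¹ (qfact (j+1))⁻¹ (qfact j)⁻¹
    (qv ((↑(j+2):ℤ) - 1)) (qv (1 - (↑(j+2):ℤ))) (AUX j) hA2 hB2 hS2
  simpa only [dp, show j+2-1 = j+1 from rfl, show j+2-2 = j from rfl] using final
end
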